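/- Let h > 0 be real. Let m : ℝ → ℂ be Lebesgue measurable and Lebesgue integrable, let j ∈ ℕ, let a₀,…,a_j ∈ ℂ, N₀,…,N_j ∈ ℕ, and c₀,…,c_j ∈ ℝ with c_k ∉ {1/(2h) + ν/h : ν ∈ ℤ} for every k. Suppose f : ℝ → ℂ satisfies f(w) = ∫_ℝ m(x) e^{-2πi w x} dx + ∑_{k=0}^{j} a_k e^{-2πi c_k w} (2πi w)^{N_k} for every w ∈ ℝ. Then for every y ∈ ℝ, lim_{n→∞} Δ_h^n[f](y) / 2^n = 0, i.e. Δ_h^n[f](y) = o(2^n). -/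

import Mathlib

/-!
Write `f` as the Fourier integral of `m` plus `∑ aₖ gₖ` and use linearity of `Δ_h^n`.
If `g (w + h) = μ * g w`, then `Δ_h` acts on `g * q` as `(μ - 1) + μ Δ_h` acts on `q`, so
`Δ_h^n (g q) = g ∑_t C(n,t) μ^t (μ - 1)^(n-t) Δ_h^t q`; for a polynomial `q` of degree `N` only
`t ≤ N` contributes, and each term is `O(n^N |μ - 1|^n) = o(2^n)` because `|μ| = 1` and `μ ≠ -1`,
which is exactly the condition on `cₖ`. For the integral, `Δ_h^n` passes under the integral sign
and produces the factor `(e^{-2πihx} - 1)^n`, of modulus `< 2^n` off the countable set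
`1/(2h) + ℤ/h`, so dominated convergence applies.
-/

open MeasureTheory Filter Finset Topology
open scoped fwdDiff

section fwdDiff

variable {M R : Type*} [AddCommMonoid M] [CommRing R] (h : M)

theorem fwdDiff_iter_eq_sum_mul (f : M → R) (n : ℕ) (y : M) :
    Δ_[h] ^[n] f y = ∑ k ∈ range (n + 1), (n.choose k : R) * (-1) ^ (n - k) * f (y + k • h) := by
  rw [fwdDiff_iter_eq_sum_shift]
  refine sum_congr rfl fun k _ => ?_
  rw [zsmul_eq_mul]
  push_cast
  ring

theorem sum_range_choose_mul_neg_one_pow_mul_pow_mul_choose (μ : R) (n t : ℕ) :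
    ∑ k ∈ range (n + 1), (n.choose k : R) * (-1) ^ (n - k) * μ ^ k * k.choose t
      = n.choose t * μ ^ t * (μ - 1) ^ (n - t) := by
  rcases lt_or_ge n t with hnt | htn
  · rw [Nat.choose_eq_zero_of_lt hnt, Nat.cast_zero, zero_mul, zero_mul]
    exact sum_eq_zero fun k hk => by
      rw [Nat.choose_eq_zero_of_lt (show k < t by grind), Nat.cast_zero, mul_zero]
  obtain ⟨m, rfl⟩ := Nat.exists_eq_add_of_le htn
  rw [add_assoc, sum_range_add, sum_eq_zero fun k hk => by
      rw [Nat.choose_eq_zero_of_lt (mem_range.1 hk), Nat.cast_zero, mul_zero],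
    zero_add, Nat.add_sub_cancel_left, sub_eq_add_neg, add_pow, mul_sum]
  refine sum_congr rfl fun i hi => ?_
  have hchoose :
      ((t + m).choose (t + i) : R) * (t + i).choose t = (t + m).choose t * m.choose i := by
    rw [← Nat.cast_mul, Nat.choose_mul (Nat.le_add_right t i), Nat.add_sub_cancel_left,
      Nat.add_sub_cancel_left, Nat.cast_mul]
  rw [Nat.add_sub_add_left, pow_add]
  linear_combination (-1 : R) ^ (m - i) * μ ^ t * μ ^ i * hchoose

variable {h} {g : M → R} {μ : R}

theorem apply_add_nsmul_of_apply_add_eq_mul (hg : ∀ w, g (w + h) = μ * g w) (y : M) (k : ℕ) :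
    g (y + k • h) = μ ^ k * g y := by
  induction k with
  | zero => simp
  | succ k ih => rw [succ_nsmul, ← add_assoc, hg, ih, pow_succ, mul_comm _ μ, mul_assoc]

theorem fwdDiff_iter_of_apply_add_eq_mul (hg : ∀ w, g (w + h) = μ * g w) (n : ℕ) :
    Δ_[h] ^[n] g = (μ - 1) ^ n • g := by
  have hΔ : Δ_[h] g = (μ - 1) • g := funext fun w => by
    simp only [fwdDiff, hg, Pi.smul_apply, smul_eq_mul]
    ring
  induction n with
  | zero => simp
  | succ n ih =>
    rw [Function.iterate_succ_apply', ih, fwdDiff_const_smul, hΔ, smul_smul, pow_succ]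

theorem fwdDiff_iter_mul_of_apply_add_eq_mul (hg : ∀ w, g (w + h) = μ * g w) (q : M → R)
    (n : ℕ) (y : M) :
    Δ_[h] ^[n] (g * q) y
      = g y * ∑ t ∈ range (n + 1),
          (n.choose t : R) * μ ^ t * (μ - 1) ^ (n - t) * Δ_[h] ^[t] q y := by
  have newton : ∀ k ∈ range (n + 1),
      q (y + k • h) = ∑ t ∈ range (n + 1), (k.choose t : R) * Δ_[h] ^[t] q y := fun k hk => by
    rw [shift_eq_sum_fwdDiff_iter h q k y, eq_comm]
    simp_rw [nsmul_eq_mul]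
    refine eventually_constant_sum (fun t ht => ?_) (mem_range.1 hk)
    rw [Nat.choose_eq_zero_of_lt ht, Nat.cast_zero, zero_mul]
  calc Δ_[h] ^[n] (g * q) y
      = ∑ k ∈ range (n + 1), ∑ t ∈ range (n + 1),
          g y * ((n.choose k : R) * (-1) ^ (n - k) * μ ^ k * k.choose t * Δ_[h] ^[t] q y) := by
        rw [fwdDiff_iter_eq_sum_mul]
        refine sum_congr rfl fun k hk => ?_
        rw [Pi.mul_apply, apply_add_nsmul_of_apply_add_eq_mul hg, newton k hk, mul_sum, mul_sum]
        refine sum_congr rfl fun t _ => ?_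
        ring
    _ = g y * ∑ t ∈ range (n + 1), (∑ k ∈ range (n + 1),
          (n.choose k : R) * (-1) ^ (n - k) * μ ^ k * k.choose t) * Δ_[h] ^[t] q y := by
        rw [sum_comm, mul_sum]
        simp_rw [sum_mul, mul_sum]
    _ = _ := by simp_rw [sum_range_choose_mul_neg_one_pow_mul_pow_mul_choose]

theorem fwdDiff_iter_eq_zero_of_le {q : M → R} {N : ℕ} (hq : Δ_[h] ^[N] q = 0) {t : ℕ}
    (hNt : N ≤ t) : Δ_[h] ^[t] q = 0 := by
  obtain ⟨j, rfl⟩ := Nat.exists_eq_add_of_le hNt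
  rw [add_comm, Function.iterate_add_apply, hq]
  exact Function.iterate_fixed (fwdDiff_const (h := h) (0 : R)) j

end fwdDiff

theorem tendsto_choose_mul_pow_sub_div_two_pow {z : ℂ} (hz : ‖z‖ < 2) (t : ℕ) :
    Tendsto (fun n : ℕ => (n.choose t : ℂ) * z ^ (n - t) / 2 ^ n) atTop (𝓝 0) := by
  set s := max ‖z‖ 1
  have hs : s < 2 := max_lt hz one_lt_two
  refine squeeze_zero_norm (fun n => ?_)
    (tendsto_pow_const_mul_const_pow_of_lt_one t (by positivity) (by linarith : s / 2 < 1))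
  have hchoose : ((n.choose t : ℕ) : ℝ) ≤ (n : ℝ) ^ t := by exact_mod_cast Nat.choose_le_pow n t
  have hpow : ‖z‖ ^ (n - t) ≤ s ^ n :=
    (pow_le_pow_left₀ (norm_nonneg z) (le_max_left _ _) _).trans
      (pow_le_pow_right₀ (le_max_right _ _) (Nat.sub_le n t))
  rw [norm_div, norm_mul, norm_pow, norm_pow, Complex.norm_natCast, Complex.norm_two, div_pow,
    mul_div_assoc]
  gcongr

theorem tendsto_fwdDiff_iter_mul_div_two_pow {M : Type*} [AddCommMonoid M] {h : M} {g q : M → ℂ}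
    {μ : ℂ} (hμ : ‖μ - 1‖ < 2) (hg : ∀ w, g (w + h) = μ * g w) {N : ℕ} (hq : Δ_[h] ^[N] q = 0)
    (y : M) : Tendsto (fun n => Δ_[h] ^[n] (g * q) y / 2 ^ n) atTop (𝓝 0) := by
  have hsum : ∀ n ≥ N, Δ_[h] ^[n] (g * q) y / 2 ^ n = ∑ t ∈ range N,
      g y * μ ^ t * Δ_[h] ^[t] q y * ((n.choose t : ℂ) * (μ - 1) ^ (n - t) / 2 ^ n) := by
    intro n hn
    rw [fwdDiff_iter_mul_of_apply_add_eq_mul hg, mul_sum, sum_div,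
      eventually_constant_sum (N := N) (fun t ht => ?_) (by omega)]
    · exact sum_congr rfl fun t _ => by ring
    · rw [fwdDiff_iter_eq_zero_of_le hq ht, Pi.zero_apply, mul_zero, mul_zero, zero_div]
  rw [← show ∑ t ∈ range N, g y * μ ^ t * Δ_[h] ^[t] q y * 0 = 0 by simp]
  refine (tendsto_finsetSum _ fun t _ =>
    (tendsto_choose_mul_pow_sub_div_two_pow hμ t).const_mul _).congr' ?_
  filter_upwards [eventually_ge_atTop N] with n hn
  exact (hsum n hn).symm

open Polynomial in
theorem fwdDiff_iter_ofReal_mul_pow_eq_zero (b : ℂ) (h : ℝ) {N n : ℕ} (hNn : N < n) :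
    Δ_[h] ^[n] (fun w : ℝ => (b * w) ^ N) = 0 := by
  funext y
  set P : ℂ[X] := (C (b * h) * X + C (b * y)) ^ N
  have hP : P.natDegree < n :=
    (natDegree_pow_le.trans (mul_le_of_le_one_right (Nat.zero_le N) natDegree_linear_le)).trans_lt
      hNn
  have hzero := congr_fun (fwdDiff_iter_eq_zero_of_degree_lt hP) 0
  rw [fwdDiff_iter_eq_sum_shift, Pi.zero_apply] at hzero
  rw [fwdDiff_iter_eq_sum_shift, Pi.zero_apply, ← hzero]
  refine sum_congr rfl fun k _ => ?_
  simp only [P, eval_pow, eval_add, eval_mul, eval_C, eval_X, nsmul_eq_mul]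
  push_cast
  ring_nf

theorem exp_neg_two_pi_I_mul_add (c w h : ℝ) :
    Complex.exp (-2 * Real.pi * Complex.I * c * (w + h : ℝ))
      = Complex.exp (-2 * Real.pi * Complex.I * c * h)
        * Complex.exp (-2 * Real.pi * Complex.I * c * w) := by
  rw [← Complex.exp_add]
  push_cast
  ring_nf

theorem norm_exp_neg_two_pi_I_mul (a b : ℝ) :
    ‖Complex.exp (-2 * Real.pi * Complex.I * a * b)‖ = 1 := by
  rw [show -2 * Real.pi * Complex.I * a * b = ((-2 * Real.pi * a * b : ℝ) : ℂ) * Complex.I by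
    push_cast; ring, Complex.norm_exp_ofReal_mul_I]

theorem norm_exp_neg_two_pi_I_mul_sub_one_lt_two {h c : ℝ} (hh : 0 < h)
    (hc : ¬ ∃ ν : ℤ, c = 1 / (2 * h) + ν / h) :
    ‖Complex.exp (-2 * Real.pi * Complex.I * c * h) - 1‖ < 2 := by
  rw [show -2 * Real.pi * Complex.I * c * h = Complex.I * ((-2 * Real.pi * c * h : ℝ) : ℂ) by
    push_cast; ring, Complex.norm_exp_I_mul_ofReal_sub_one, norm_mul, Real.norm_eq_abs,
    Real.norm_eq_abs, abs_two]
  have hsin : |Real.sin (-2 * Real.pi * c * h / 2)| ≠ 1 := by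
    rw [Ne, Real.abs_sin_eq_one_iff]
    rintro ⟨k, hk⟩
    refine hc ⟨-k - 1, ?_⟩
    field_simp
    push_cast
    nlinarith [Real.pi_pos]
  linarith [lt_of_le_of_ne (Real.abs_sin_le_one _) hsin]

theorem fwdDiff_iter_integral {M X E : Type*} [AddCommMonoid M] [MeasurableSpace X]
    [NormedAddCommGroup E] [NormedSpace ℝ E] {μ : Measure X} {h : M} {F : M → X → E}
    (hF : ∀ w, Integrable (F w) μ) (n : ℕ) (y : M) :
    Δ_[h] ^[n] (fun w => ∫ x, F w x ∂μ) y = ∫ x, Δ_[h] ^[n] (fun w => F w x) y ∂μ := by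
  simp_rw [fwdDiff_iter_eq_sum_shift, ← Int.cast_smul_eq_zsmul ℝ]
  rw [integral_finsetSum]
  · simp_rw [integral_smul]
  · exact fun k _ => (hF _).smul _

theorem tendsto_integral_pow_mul_of_norm_lt_one {X : Type*} [MeasurableSpace X] {μ : Measure X}
    {u G : X → ℂ} (hu : AEStronglyMeasurable u μ) (hG : Integrable G μ)
    (hlt : ∀ᵐ x ∂μ, ‖u x‖ < 1) :
    Tendsto (fun n => ∫ x, u x ^ n * G x ∂μ) atTop (𝓝 0) := by
  have hlim := tendsto_integral_of_dominated_convergence (fun x => ‖G x‖)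
    (fun n => (hu.pow n).mul hG.1) hG.norm
    (fun n => hlt.mono fun x hx => by
      simp only [Pi.mul_apply, Pi.pow_apply, norm_mul, norm_pow]
      exact mul_le_of_le_one_left (norm_nonneg _) (pow_le_one₀ (norm_nonneg _) hx.le))
    (hlt.mono fun x hx => by
      simpa using (tendsto_pow_atTop_nhds_zero_of_norm_lt_one hx).mul_const (G x))
  simpa using hlim

theorem tendsto_fwdDiff_iter_fourierIntegral_div_two_pow {h : ℝ} (hh : 0 < h) {m : ℝ → ℂ}
    (hm : Integrable m) (y : ℝ) :
    Tendsto (fun n => Δ_[h] ^[n]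
      (fun w : ℝ => ∫ x : ℝ, m x * Complex.exp (-2 * Real.pi * Complex.I * w * x)) y / 2 ^ n)
      atTop (𝓝 0) := by
  have hcont : ∀ w : ℝ, Continuous fun x : ℝ => Complex.exp (-2 * Real.pi * Complex.I * w * x) :=
    fun w => by fun_prop
  have hint : ∀ w : ℝ, Integrable fun x => m x * Complex.exp (-2 * Real.pi * Complex.I * w * x) :=
    fun w => hm.mul_bdd (hcont w).aestronglyMeasurable
      (ae_of_all _ fun x => (norm_exp_neg_two_pi_I_mul w x).le)
  set u : ℝ → ℂ := fun x => (Complex.exp (-2 * Real.pi * Complex.I * x * h) - 1) / 2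
  have hΔ : ∀ n, Δ_[h] ^[n]
      (fun w : ℝ => ∫ x : ℝ, m x * Complex.exp (-2 * Real.pi * Complex.I * w * x)) y / 2 ^ n
      = ∫ x, u x ^ n * (m x * Complex.exp (-2 * Real.pi * Complex.I * y * x)) := fun n => by
    rw [fwdDiff_iter_integral hint, ← integral_div]
    congr 1 with x
    rw [fwdDiff_iter_of_apply_add_eq_mul (μ := Complex.exp (-2 * Real.pi * Complex.I * x * h))
      fun w => by rw [mul_left_comm, ← Complex.exp_add]; push_cast; ring_nf]
    simp only [u, Pi.smul_apply, smul_eq_mul, div_pow]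
    ring
  have hlt : ∀ᵐ x, ‖u x‖ < 1 := by
    filter_upwards [(Set.countable_range fun ν : ℤ => 1 / (2 * h) + ν / h).ae_notMem volume]
      with x hx
    rw [norm_div, Complex.norm_two, div_lt_one two_pos]
    exact norm_exp_neg_two_pi_I_mul_sub_one_lt_two hh fun ⟨ν, hν⟩ => hx ⟨ν, hν.symm⟩
  simp_rw [hΔ]
  have hu : Continuous u := by fun_prop
  exact tendsto_integral_pow_mul_of_norm_lt_one hu.aestronglyMeasurable (hint y) hlt

theorem tendsto_fwdDiff_iter_exp_mul_pow_div_two_pow {h c : ℝ} (hh : 0 < h)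
    (hc : ¬ ∃ ν : ℤ, c = 1 / (2 * h) + ν / h) (N : ℕ) (y : ℝ) :
    Tendsto (fun n => Δ_[h] ^[n] (fun w : ℝ => Complex.exp (-2 * Real.pi * Complex.I * c * w)
      * (2 * Real.pi * Complex.I * w) ^ N) y / 2 ^ n) atTop (𝓝 0) :=
  tendsto_fwdDiff_iter_mul_div_two_pow (norm_exp_neg_two_pi_I_mul_sub_one_lt_two hh hc)
    (exp_neg_two_pi_I_mul_add c · h)
    (fwdDiff_iter_ofReal_mul_pow_eq_zero _ h (Nat.lt_succ_self N)) y

theorem forward_differences_little_o_two_pow_general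
    (h : ℝ) (hh : 0 < h)
    (m : ℝ → ℂ) (hmi : Integrable m)
    (j : ℕ) (a : ℕ → ℂ) (N : ℕ → ℕ) (c : ℕ → ℝ)
    (hc : ∀ k ≤ j, ¬ ∃ ν : ℤ, c k = 1 / (2 * h) + (ν : ℝ) / h)
    (f : ℝ → ℂ)
    (hf : ∀ w : ℝ,
      f w = (∫ x : ℝ, m x * Complex.exp (-2 * (Real.pi : ℂ) * Complex.I * (w : ℂ) * (x : ℂ)))
        + ∑ k ∈ Finset.range (j + 1),
            a k * Complex.exp (-2 * (Real.pi : ℂ) * Complex.I * (c k : ℂ) * (w : ℂ))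
              * (2 * (Real.pi : ℂ) * Complex.I * (w : ℂ)) ^ (N k))
    (y : ℝ) :
    Tendsto (fun n : ℕ =>
        (∑ k ∈ Finset.range (n + 1),
          (n.choose k : ℂ) * (-1) ^ (n - k) * f (y + (k : ℝ) * h)) / 2 ^ n)
      atTop (nhds 0) := by
  have hf' : f = (fun w : ℝ => ∫ x : ℝ, m x * Complex.exp (-2 * Real.pi * Complex.I * w * x))
      + ∑ k ∈ range (j + 1), a k • fun w : ℝ => Complex.exp (-2 * Real.pi * Complex.I * c k * w)
          * (2 * Real.pi * Complex.I * w) ^ N k := by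
    ext w
    simp [hf w, mul_assoc]
  have hΔ : ∀ n : ℕ, ∑ k ∈ range (n + 1), (n.choose k : ℂ) * (-1) ^ (n - k) * f (y + k * h)
      = Δ_[h] ^[n] f y := fun n => by simp [fwdDiff_iter_eq_sum_mul]
  simp_rw [hΔ, hf', fwdDiff_iter_add, fwdDiff_iter_finsetSum, fwdDiff_iter_const_smul,
    Pi.add_apply, Finset.sum_apply, Pi.smul_apply, smul_eq_mul, add_div, sum_div, mul_div_assoc]
  rw [show (0 : ℂ) = 0 + ∑ k ∈ range (j + 1), a k * 0 by simp]
  exact (tendsto_fwdDiff_iter_fourierIntegral_div_two_pow hh hmi y).add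
    (tendsto_finsetSum _ fun k hk => (tendsto_fwdDiff_iter_exp_mul_pow_div_two_pow hh
      (hc k (Nat.lt_succ_iff.1 (mem_range.1 hk))) (N k) y).const_mul (a k))

theorem forward_differences_little_o_two_pow
    (h : ℝ) (hh : 0 < h)
    (m : ℝ → ℂ) (hm : Measurable m) (hmi : Integrable m)
    (j : ℕ) (a : ℕ → ℂ) (N : ℕ → ℕ) (c : ℕ → ℝ)
    (hc : ∀ k ≤ j, ¬ ∃ ν : ℤ, c k = 1 / (2 * h) + (ν : ℝ) / h)
    (f : ℝ → ℂ)
    (hf : ∀ w : ℝ,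
      f w = (∫ x : ℝ, m x * Complex.exp (-2 * (Real.pi : ℂ) * Complex.I * (w : ℂ) * (x : ℂ)))
        + ∑ k ∈ Finset.range (j + 1),
            a k * Complex.exp (-2 * (Real.pi : ℂ) * Complex.I * (c k : ℂ) * (w : ℂ))
              * (2 * (Real.pi : ℂ) * Complex.I * (w : ℂ)) ^ (N k))
    (y : ℝ) :
    Tendsto (fun n : ℕ =>
        (∑ k ∈ Finset.range (n + 1),
          (n.choose k : ℂ) * (-1) ^ (n - k) * f (y + (k : ℝ) * h)) / 2 ^ n)
      atTop (nhds 0) :=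
  forward_differences_little_o_two_pow_general h hh m hmi j a N c hc f hf y
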